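/- arXiv:1510.03060 — 3 statements merged into one kernel-verified Lean document; each statement's English description precedes it below -/
import Mathlib

section
/- Plotkin-type bound, case E ≥ 2C: let X ⊆ F_2^{Cm×n} be a code whose transformed codebook TX has minimum transform distance d (with respect to T̂). If d > 2(1 − C/E)Cmn, then |X| ≤ d / (d − 2(1 − C/E)Cmn). -/
open Matrix Finset

noncomputable def colDelta {a c : ℕ} (B : Matrix (Fin a) (Fin c) (ZMod 2))
    (u v : Fin a → ZMod 2) : ℕ :=
  sInf {k | ∃ s : Finset (Fin c), s.card = k ∧ u + ∑ j ∈ s, Bᵀ j = v}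

noncomputable def transDist {a b c : ℕ} (B : Matrix (Fin a) (Fin c) (ZMod 2))
    (M1 M2 : Matrix (Fin a) (Fin b) (ZMod 2)) : ℕ :=
  ∑ i : Fin b, colDelta B (fun r => M1 r i) (fun r => M2 r i)

/-!
Choose for every codeword `X` and column `i` a representation `(T X)_i = T̂ V_X(i)` with
`wt V_X(i) ≤ Cm`. Since adding the columns of `T̂` indexed by the support of `V_X(i) - V_Y(i)`
moves one column to the other, the transform distance is at most `∑ᵢ d_H(V_X(i), V_Y(i))`.
For binary words, coordinate `l` contributes `2 tₗ (M - tₗ)` to `∑_{X,Y} d_H`, where `tₗ` counts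
the words with a one there; Cauchy–Schwarz and `∑ₗ tₗ ≤ M C m ≤ M E m / 2` bound the total per
column by `2M²(1 - C/E)Cm`. Comparing with the lower bound `M(M - 1)d` gives the claim.
-/

theorem colDelta_mulVec_le_hammingDist {a c : ℕ} (B : Matrix (Fin a) (Fin c) (ZMod 2))
    (z₁ z₂ : Fin c → ZMod 2) : colDelta B (B *ᵥ z₁) (B *ᵥ z₂) ≤ hammingDist z₁ z₂ := by
  refine Nat.sInf_le ⟨({j | z₁ j ≠ z₂ j} : Finset (Fin c)), rfl, ?_⟩
  ext r
  rw [Pi.add_apply, Finset.sum_apply (g := fun j => Bᵀ j), Finset.sum_filter]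
  simp only [transpose_apply, mulVec, dotProduct, ← Finset.sum_add_distrib]
  refine Finset.sum_congr rfl fun j _ => ?_
  generalize B r j = b; generalize z₁ j = x; generalize z₂ j = y
  revert b x y; decide

theorem transDist_le_sum_hammingDist {a b c : ℕ} (B : Matrix (Fin a) (Fin c) (ZMod 2))
    {M₁ M₂ : Matrix (Fin a) (Fin b) (ZMod 2)} {z₁ z₂ : Fin b → Fin c → ZMod 2}
    (h₁ : ∀ i, B *ᵥ z₁ i = fun r => M₁ r i) (h₂ : ∀ i, B *ᵥ z₂ i = fun r => M₂ r i) :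
    transDist B M₁ M₂ ≤ ∑ i, hammingDist (z₁ i) (z₂ i) :=
  Finset.sum_le_sum fun i _ => h₁ i ▸ h₂ i ▸ colDelta_mulVec_le_hammingDist B _ _

theorem Finset.sum_sum_sum_comm {α ι M : Type*} [Fintype ι] [AddCommMonoid M] (s : Finset α)
    (f : α → α → ι → M) :
    ∑ x ∈ s, ∑ y ∈ s, ∑ i, f x y i = ∑ i, ∑ x ∈ s, ∑ y ∈ s, f x y i :=
  (Finset.sum_congr rfl fun _ _ => Finset.sum_comm).trans Finset.sum_comm

theorem ZMod.two_ite_ne_eq (x y : ZMod 2) :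
    (if x ≠ y then (1 : ℝ) else 0) =
      (if x ≠ 0 then 1 else 0) * (1 - if y ≠ 0 then 1 else 0) +
        (1 - if x ≠ 0 then 1 else 0) * (if y ≠ 0 then 1 else 0) := by
  obtain rfl | rfl : x = 0 ∨ x = 1 := by revert x; decide
  all_goals obtain rfl | rfl : y = 0 ∨ y = 1 := by revert y; decide
  all_goals norm_num

theorem sum_sum_ite_ne_eq {α : Type*} (s : Finset α) (x : α → ZMod 2) :
    ∑ a ∈ s, ∑ b ∈ s, (if x a ≠ x b then (1 : ℝ) else 0) =
      2 * (#{a ∈ s | x a ≠ 0} : ℝ) * (#s - #{a ∈ s | x a ≠ 0}) := by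
  have hzeros : ∑ a ∈ s, (1 - if x a ≠ 0 then (1 : ℝ) else 0) = #s - #{a ∈ s | x a ≠ 0} := by
    rw [Finset.sum_sub_distrib, Finset.sum_boole]; simp
  simp only [fun a b => ZMod.two_ite_ne_eq (x a) (x b), Finset.sum_add_distrib, ← Finset.mul_sum,
    ← Finset.sum_mul, hzeros, Finset.sum_boole]
  ring

theorem hammingDist_cast_eq_sum {ι : Type*} [Fintype ι] (u w : ι → ZMod 2) :
    (hammingDist u w : ℝ) = ∑ l, if u l ≠ w l then (1 : ℝ) else 0 := by
  rw [Finset.sum_boole]; rfl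

theorem sum_hammingNorm_cast_eq_sum {α ι : Type*} [Fintype ι] (s : Finset α)
    (v : α → ι → ZMod 2) :
    ∑ X ∈ s, (hammingNorm (v X) : ℝ) = ∑ l, (#{X ∈ s | v X l ≠ 0} : ℝ) := by
  simp only [hammingNorm, ← Finset.sum_boole]
  exact Finset.sum_comm

theorem sum_sum_hammingDist_eq {α ι : Type*} [Fintype ι] (s : Finset α) (v : α → ι → ZMod 2) :
    ∑ X ∈ s, ∑ Y ∈ s, (hammingDist (v X) (v Y) : ℝ) =
      ∑ l, 2 * (#{X ∈ s | v X l ≠ 0} : ℝ) * (#s - #{X ∈ s | v X l ≠ 0}) := by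
  simp only [hammingDist_cast_eq_sum, Finset.sum_sum_sum_comm]
  exact Finset.sum_congr rfl fun l _ => sum_sum_ite_ne_eq s (v · l)

theorem sum_sum_hammingDist_le {α ι : Type*} [Fintype ι] (s : Finset α) (v : α → ι → ZMod 2)
    {ρ : ℝ} (hρ : ρ ≤ 1 / 2) (hv : ∀ X ∈ s, (hammingNorm (v X) : ℝ) ≤ ρ * Fintype.card ι) :
    ∑ X ∈ s, ∑ Y ∈ s, (hammingDist (v X) (v Y) : ℝ) ≤
      2 * #s ^ 2 * ρ * (1 - ρ) * Fintype.card ι := by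
  set N : ℝ := (Fintype.card ι : ℝ)
  set M : ℝ := (#s : ℝ)
  set t : ι → ℝ := fun l => (#{X ∈ s | v X l ≠ 0} : ℝ)
  have hN : 0 ≤ N := Nat.cast_nonneg _
  have hM : 0 ≤ M := Nat.cast_nonneg _
  have hQ₀ : 0 ≤ ∑ l, t l ^ 2 := Finset.sum_nonneg fun _ _ => sq_nonneg _
  have hS : ∑ l, t l ≤ M * (ρ * N) := by
    rw [← sum_hammingNorm_cast_eq_sum]
    simpa [M] using Finset.sum_le_sum hv
  have hCS : (∑ l, t l) ^ 2 ≤ N * ∑ l, t l ^ 2 := by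
    simpa using sq_sum_le_card_mul_sum_sq (s := Finset.univ) (f := t)
  have hsum : ∑ X ∈ s, ∑ Y ∈ s, (hammingDist (v X) (v Y) : ℝ) =
      2 * (M * ∑ l, t l - ∑ l, t l ^ 2) := by
    rw [sum_sum_hammingDist_eq, Finset.mul_sum, ← Finset.sum_sub_distrib, Finset.mul_sum]
    exact Finset.sum_congr rfl fun _ _ => by ring
  rw [hsum]
  -- `M S - S² / N` increases in `S` up to `M N / 2 ≥ M ρ N`, the bound on `S`.
  have hfactor : 0 ≤ (M * (ρ * N) - ∑ l, t l) * (M * N * (1 - ρ) - ∑ l, t l) :=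
    mul_nonneg (by linarith)
      (by nlinarith [mul_nonneg (mul_nonneg hM hN) (by linarith : (0 : ℝ) ≤ 1 - 2 * ρ)])
  rcases hN.eq_or_lt with hN₀ | hN₀
  · rw [← hN₀] at hS ⊢
    nlinarith
  · nlinarith

theorem card_mul_card_sub_one_mul_le_sum_sum {α : Type*} [DecidableEq α] (s : Finset α)
    (D : α → α → ℝ) {d : ℝ} (hD : ∀ x ∈ s, 0 ≤ D x x)
    (hd : ∀ x ∈ s, ∀ y ∈ s, x ≠ y → d ≤ D x y) :
    #s * (#s - 1) * d ≤ ∑ x ∈ s, ∑ y ∈ s, D x y := by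
  rw [mul_assoc, ← nsmul_eq_mul, ← Finset.sum_const]
  refine Finset.sum_le_sum fun x hx => ?_
  rw [← Finset.add_sum_erase s _ hx, ← Finset.cast_card_erase_of_mem hx, ← nsmul_eq_mul,
    ← Finset.sum_const]
  have herase : ∑ _y ∈ s.erase x, d ≤ ∑ y ∈ s.erase x, D x y :=
    Finset.sum_le_sum fun y hy =>
      hd x hx y (Finset.mem_of_mem_erase hy) (Finset.ne_of_mem_erase hy).symm
  linarith [hD x hx]

theorem le_div_sub_of_mul_sub_one_mul_le {M d B : ℝ} (hM : 0 ≤ M) (hd : 0 ≤ d) (hBd : B < d)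
    (h : M * (M - 1) * d ≤ M ^ 2 * B) : M ≤ d / (d - B) := by
  rw [le_div_iff₀ (sub_pos.mpr hBd)]
  rcases hM.eq_or_lt with rfl | hM₀
  · simpa using hd
  · nlinarith

theorem plotkin_type_large_E_general {C E m n d : ℕ} (hE : 2 * C ≤ E)
    (That : Matrix (Fin (C * m)) (Fin (E * m)) (ZMod 2))
    (T : Matrix (Fin (C * m)) (Fin (C * m)) (ZMod 2))
    (hcol : ∀ v : Fin (C * m) → ZMod 2, ∃ z : Fin (E * m) → ZMod 2,
      That.mulVec z = v ∧ hammingNorm z ≤ C * m)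
    (𝒞 : Finset (Matrix (Fin (C * m)) (Fin n) (ZMod 2)))
    (hdist : ∀ X1 ∈ 𝒞, ∀ X2 ∈ 𝒞, X1 ≠ X2 → d ≤ transDist That (T * X1) (T * X2))
    (hd : 2 * (1 - (C : ℝ) / E) * C * m * n < d) :
    (𝒞.card : ℝ) ≤ d / ((d : ℝ) - 2 * (1 - (C : ℝ) / E) * C * m * n) := by
  set ρ : ℝ := (C : ℝ) / E
  have hρE : ρ * E = C := by
    rcases eq_or_ne E 0 with hE₀ | hE₀
    · simp [ρ, hE₀, show C = 0 by omega]
    · exact div_mul_cancel₀ _ (Nat.cast_ne_zero.mpr hE₀)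
  have hρ : ρ ≤ 1 / 2 := by
    have h2CE : (2 * C : ℝ) ≤ E := by exact_mod_cast hE
    exact div_le_of_le_mul₀ (Nat.cast_nonneg _) (by norm_num) (by linarith)
  choose V hV hVw using fun (X : Matrix (Fin (C * m)) (Fin n) (ZMod 2)) i =>
    hcol fun r => (T * X) r i
  have hVρ : ∀ X i, (hammingNorm (V X i) : ℝ) ≤ ρ * Fintype.card (Fin (E * m)) := by
    intro X i
    rw [Fintype.card_fin, Nat.cast_mul, ← mul_assoc, hρE, ← Nat.cast_mul]
    exact_mod_cast hVw X i
  have hupper : ∑ X ∈ 𝒞, ∑ Y ∈ 𝒞, (transDist That (T * X) (T * Y) : ℝ) ≤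
      (#𝒞 : ℝ) ^ 2 * (2 * (1 - ρ) * C * m * n) := calc
    _ ≤ ∑ X ∈ 𝒞, ∑ Y ∈ 𝒞, ∑ i, (hammingDist (V X i) (V Y i) : ℝ) := by
      gcongr with X _ Y _
      exact_mod_cast transDist_le_sum_hammingDist That (hV X) (hV Y)
    _ = ∑ i, ∑ X ∈ 𝒞, ∑ Y ∈ 𝒞, (hammingDist (V X i) (V Y i) : ℝ) := Finset.sum_sum_sum_comm _ _
    _ ≤ ∑ _i : Fin n, 2 * (#𝒞 : ℝ) ^ 2 * ρ * (1 - ρ) * Fintype.card (Fin (E * m)) :=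
      Finset.sum_le_sum fun i _ =>
        sum_sum_hammingDist_le 𝒞 (V · i) hρ fun X _ => hVρ X i
    _ = _ := by
      simp only [Finset.sum_const, Finset.card_univ, Fintype.card_fin, nsmul_eq_mul, Nat.cast_mul]
      linear_combination (2 * (#𝒞 : ℝ) ^ 2 * (1 - ρ) * m * n) * hρE
  have hlower := card_mul_card_sub_one_mul_le_sum_sum 𝒞
    (fun X Y => (transDist That (T * X) (T * Y) : ℝ)) (fun _ _ => Nat.cast_nonneg _)
    fun X hX Y hY hXY => Nat.cast_le.mpr (hdist X hX Y hY hXY)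
  exact le_div_sub_of_mul_sub_one_mul_le (Nat.cast_nonneg _) (Nat.cast_nonneg _) hd
    (hlower.trans hupper)

/-- Plotkin-type bound, case `E ≥ 2C`: if the transformed codebook `T𝒞` has minimum
transform distance `d > 2(1 - C/E)Cmn` w.r.t. `T̂`, then `|𝒞| ≤ d/(d - 2(1 - C/E)Cmn)`.
The hypothesis `hcol` records that every column vector is expressible as `T̂V`
with `wt(V) ≤ Cm`. -/
theorem plotkin_type_large_E {C E m n d : ℕ} (hC : 0 < C) (hE : 2 * C ≤ E)
    (That : Matrix (Fin (C * m)) (Fin (E * m)) (ZMod 2))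
    (T : Matrix (Fin (C * m)) (Fin (C * m)) (ZMod 2))
    (hcol : ∀ v : Fin (C * m) → ZMod 2, ∃ z : Fin (E * m) → ZMod 2,
      That.mulVec z = v ∧ hammingNorm z ≤ C * m)
    (𝒞 : Finset (Matrix (Fin (C * m)) (Fin n) (ZMod 2)))
    (hdist : ∀ X1 ∈ 𝒞, ∀ X2 ∈ 𝒞, X1 ≠ X2 → d ≤ transDist That (T * X1) (T * X2))
    (hd : 2 * (1 - (C : ℝ) / E) * C * m * n < d) :
    (𝒞.card : ℝ) ≤ d / ((d : ℝ) - 2 * (1 - (C : ℝ) / E) * C * m * n) :=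
  plotkin_type_large_E_general hE That T hcol 𝒞 hdist hd
end

section
/- Asymptotic Plotkin-type rate bound: for networks with E ≥ 2C, if p ≤ (1 − C/E)(C/E) then any achievable rate satisfies R ≤ 1 − E²p/(CE − C²); if p > (1 − C/E)(C/E) the achievable rate is 0. For networks with E < 2C, if p ≤ 1/4 then R ≤ 1 − 4p, and if p > 1/4 the achievable rate is 0. -/
open Matrix Finset

/-!
Plotkin's bound, column by column. Since every syndrome `v` has a preimage under `That` of
weight `≤ W = Cm`, `colDelta` between two columns is at most the Hamming distance between such
preimages, so the average over pairs of codewords of the `colDelta` in one column is at most the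
average Hamming distance of words of weight `≤ W` in `F₂^(Em)`: `2W(1 - W/(Em))` when
`2W ≤ Em`, and `Em/2` in any case. Call this bound `c`. Two codewords agreeing outside a set `K`
of `k ≤ (d - 1)/c` columns are at distance `≥ d` on `K` alone, where the pair average is at most
`ck ≤ d - 1`; Plotkin's counting then bounds each such fibre by `d`. So `|𝒞| ≤ d·2^(Cm(n-k))`,
and `log d = o(n)` gives the asymptotic rate.
-/

section Hamming

variable {α : Type*} {N : ℕ}

theorem sum_card_filter_ne_eq (S : Finset α) (g : α → ZMod 2) :
    ∑ a ∈ S, #{b ∈ S | g a ≠ g b} = 2 * #{a ∈ S | g a ≠ 0} * #{a ∈ S | g a = 0} := by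
  have hzero : ∀ a ∈ {a ∈ S | g a = 0}, #{b ∈ S | g a ≠ g b} = #{b ∈ S | g b ≠ 0} := by
    intro a ha
    rw [(mem_filter.1 ha).2]
    simp_rw [ne_comm]
  have hone : ∀ a ∈ {a ∈ S | ¬g a = 0}, #{b ∈ S | g a ≠ g b} = #{b ∈ S | g b = 0} := by
    intro a ha
    have key : ∀ x y : ZMod 2, x ≠ 0 → (x ≠ y ↔ y = 0) := by decide
    simp_rw [key _ _ (mem_filter.1 ha).2]
  rw [← sum_filter_add_sum_filter_not S (g · = 0), sum_congr rfl hzero, sum_congr rfl hone,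
    sum_const, sum_const, smul_eq_mul, smul_eq_mul]
  ring

theorem sum_sum_hammingDist_eq_s11 (S : Finset α) (z : α → Fin N → ZMod 2) :
    (↑(∑ a ∈ S, ∑ b ∈ S, hammingDist (z a) (z b)) : ℝ)
      = ∑ j, 2 * (#{a ∈ S | z a j ≠ 0} : ℝ) * (#S - #{a ∈ S | z a j ≠ 0}) := by
  have hcount : ∑ a ∈ S, ∑ b ∈ S, hammingDist (z a) (z b)
      = ∑ j : Fin N, ∑ a ∈ S, #{b ∈ S | z a j ≠ z b j} := by
    simp_rw [hammingDist, card_filter]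
    exact (sum_congr rfl fun a _ => sum_comm).trans sum_comm
  have hzero (j : Fin N) : (#{a ∈ S | z a j = 0} : ℝ) = #S - #{a ∈ S | z a j ≠ 0} := by
    rw [eq_sub_iff_add_eq, ← Nat.cast_add, card_filter_add_card_filter_not]
  simp_rw [hcount, sum_card_filter_ne_eq, ← hzero]
  push_cast
  rfl

theorem sum_card_filter_ne_zero_eq (S : Finset α) (z : α → Fin N → ZMod 2) :
    ∑ j, #{a ∈ S | z a j ≠ 0} = ∑ a ∈ S, hammingNorm (z a) := by
  simp_rw [hammingNorm, card_filter]
  exact sum_comm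

theorem sum_sum_hammingDist_le_half (S : Finset α) (z : α → Fin N → ZMod 2) :
    (↑(∑ a ∈ S, ∑ b ∈ S, hammingDist (z a) (z b)) : ℝ) ≤ N / 2 * #S ^ 2 := by
  rw [sum_sum_hammingDist_eq_s11]
  calc _ ≤ ∑ _j : Fin N, ((↑(#S) : ℝ) ^ 2 / 2) :=
        sum_le_sum fun j _ => by nlinarith [sq_nonneg ((↑(#S) : ℝ) - 2 * #{a ∈ S | z a j ≠ 0})]
    _ = (N : ℝ) / 2 * (↑(#S) : ℝ) ^ 2 := by
        rw [sum_const, card_univ, Fintype.card_fin, nsmul_eq_mul]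
        ring

theorem sum_two_mul_mul_sub_le {ι : Type*} [Fintype ι] [Nonempty ι] (w : ι → ℝ) {M W : ℝ}
    (hM : 0 ≤ M) (hW : 2 * W ≤ (Fintype.card ι : ℝ)) (hw : ∑ i, w i ≤ W * M) :
    ∑ i, 2 * w i * (M - w i) ≤ 2 * W * (1 - W / (Fintype.card ι : ℝ)) * M ^ 2 := by
  set N : ℝ := (Fintype.card ι : ℝ)
  set t := ∑ i, w i
  have hN : 0 < N := Nat.cast_pos.2 Fintype.card_pos
  have hexpand : ∑ i, 2 * w i * (M - w i) = 2 * M * t - 2 * ∑ i, w i ^ 2 := by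
    simp only [t, mul_sum, ← sum_sub_distrib]
    exact sum_congr rfl fun i _ => by ring
  -- `t ↦ 2Mt - 2t²/N` is increasing for `t ≤ NM/2`, and `t ≤ WM ≤ NM/2`
  have hgap : 2 * W * (1 - W / N) * M ^ 2 - (2 * M * t - 2 * t ^ 2 / N)
      = 2 * (W * M - t) * (N * M - W * M - t) / N := by
    field_simp
    ring
  calc ∑ i, 2 * w i * (M - w i) ≤ 2 * M * t - 2 * t ^ 2 / N := by
        have hcs : t ^ 2 ≤ N * ∑ i, w i ^ 2 := sq_sum_le_card_mul_sum_sq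
        rw [hexpand, sub_le_sub_iff_left, mul_div_assoc]
        gcongr
        rwa [div_le_iff₀' hN]
    _ ≤ 2 * W * (1 - W / N) * M ^ 2 := by
        rw [← sub_nonneg, hgap]
        exact div_nonneg (mul_nonneg (by linarith) (by nlinarith)) hN.le

theorem sum_sum_hammingDist_le_of_hammingNorm_le {W : ℕ} (hN : 0 < N) (hW : 2 * W ≤ N)
    (S : Finset α) (z : α → Fin N → ZMod 2) (hz : ∀ a ∈ S, hammingNorm (z a) ≤ W) :
    (↑(∑ a ∈ S, ∑ b ∈ S, hammingDist (z a) (z b)) : ℝ)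
      ≤ 2 * W * (1 - (W : ℝ) / N) * (↑(#S) : ℝ) ^ 2 := by
  have : Nonempty (Fin N) := ⟨⟨0, hN⟩⟩
  have hweight : ∑ j, (#{a ∈ S | z a j ≠ 0} : ℝ) ≤ W * #S := by
    have := sum_le_card_nsmul S _ W hz
    rw [← sum_card_filter_ne_zero_eq, smul_eq_mul] at this
    exact_mod_cast this.trans_eq (mul_comm _ _)
  rw [sum_sum_hammingDist_eq_s11]
  simpa using sum_two_mul_mul_sub_le _ (by positivity) (by rw [Fintype.card_fin]; exact_mod_cast hW)
    hweight

end Hamming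

section ColDelta

variable {a c : ℕ} (B : Matrix (Fin a) (Fin c) (ZMod 2))

theorem colDelta_self (u : Fin a → ZMod 2) : colDelta B u u = 0 :=
  Nat.eq_zero_of_le_zero <| Nat.sInf_le ⟨∅, rfl, add_zero u⟩

theorem colDelta_le_hammingNorm {u v : Fin a → ZMod 2} {z : Fin c → ZMod 2}
    (hz : B *ᵥ z = u + v) : colDelta B u v ≤ hammingNorm z := by
  refine Nat.sInf_le ⟨({j | z j ≠ 0} : Finset (Fin c)), rfl, ?_⟩
  have hone : ∀ x : ZMod 2, x ≠ 0 → x = 1 := by decide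
  have hsupp : ∑ j ∈ {j | z j ≠ 0}, Bᵀ j = B *ᵥ z := by
    ext r
    rw [Finset.sum_apply r _ fun j => Bᵀ j, mulVec, dotProduct, sum_filter]
    refine sum_congr rfl fun j _ => ?_
    split_ifs with hj
    · rw [transpose_apply, hone _ hj, mul_one]
    · rw [not_not.1 hj, mul_zero]
  rw [hsupp, hz]
  ext r
  rw [Pi.add_apply, Pi.add_apply, ← add_assoc, CharTwo.add_self_eq_zero, zero_add]

theorem colDelta_le_hammingDist {u v : Fin a → ZMod 2} {z₁ z₂ : Fin c → ZMod 2}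
    (hz₁ : B *ᵥ z₁ = u) (hz₂ : B *ᵥ z₂ = v) : colDelta B u v ≤ hammingDist z₁ z₂ := by
  have hneg : -z₁ = z₁ := funext fun j => ZMod.neg_eq_self_mod_two (z₁ j)
  rw [hammingDist_eq_hammingNorm, hneg]
  exact colDelta_le_hammingNorm B (by rw [mulVec_add, hz₁, hz₂])

theorem sum_sum_colDelta_le {α : Type*} {z : (Fin a → ZMod 2) → Fin c → ZMod 2}
    (hz : ∀ v, B *ᵥ z v = v) (S : Finset α) (f : α → Fin a → ZMod 2) :
    ∑ x ∈ S, ∑ y ∈ S, colDelta B (f x) (f y) ≤ ∑ x ∈ S, ∑ y ∈ S, hammingDist (z (f x)) (z (f y)) :=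
  sum_le_sum fun _ _ => sum_le_sum fun _ _ => colDelta_le_hammingDist B (hz _) (hz _)

theorem sum_sum_colDelta_le_half {α : Type*} (hB : Function.Surjective B.mulVec)
    (S : Finset α) (f : α → Fin a → ZMod 2) :
    (↑(∑ x ∈ S, ∑ y ∈ S, colDelta B (f x) (f y)) : ℝ) ≤ c / 2 * (↑(#S) : ℝ) ^ 2 := by
  choose z hz using hB
  exact (Nat.cast_le.2 (sum_sum_colDelta_le B hz S f)).trans
    (sum_sum_hammingDist_le_half S (z ∘ f))

theorem sum_sum_colDelta_le_of_covering {α : Type*} {W : ℕ} (hc : 0 < c) (hW : 2 * W ≤ c)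
    (hcov : ∀ v, ∃ z, B *ᵥ z = v ∧ hammingNorm z ≤ W) (S : Finset α) (f : α → Fin a → ZMod 2) :
    (↑(∑ x ∈ S, ∑ y ∈ S, colDelta B (f x) (f y)) : ℝ)
      ≤ 2 * W * (1 - (W : ℝ) / c) * (↑(#S) : ℝ) ^ 2 := by
  choose z hz hw using hcov
  exact (Nat.cast_le.2 (sum_sum_colDelta_le B hz S f)).trans
    (sum_sum_hammingDist_le_of_hammingNorm_le hc hW S (z ∘ f) fun x _ => hw _)

end ColDelta

section Plotkin

variable {α : Type*}

theorem card_le_of_sum_sum_le (S : Finset α) (δ : α → α → ℕ) {d : ℝ} (hd : 0 ≤ d)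
    (hδ : ∀ x ∈ S, ∀ y ∈ S, x ≠ y → d ≤ δ x y)
    (hsum : (↑(∑ x ∈ S, ∑ y ∈ S, δ x y) : ℝ) ≤ (d - 1) * (↑(#S) : ℝ) ^ 2) :
    (#S : ℝ) ≤ d := by
  classical
  rcases S.eq_empty_or_nonempty with rfl | hS
  · simpa using hd
  have hrow : ∀ x ∈ S, d * (#S - 1) ≤ ∑ y ∈ S, (δ x y : ℝ) := fun x hx =>
    calc d * (#S - 1) = ∑ y ∈ S.erase x, d := by
          rw [sum_const, card_erase_of_mem hx, nsmul_eq_mul, Nat.cast_pred hS.card_pos]; ring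
      _ ≤ ∑ y ∈ S.erase x, (δ x y : ℝ) := sum_le_sum fun y hy =>
          hδ x hx y (mem_of_mem_erase hy) (ne_of_mem_erase hy).symm
      _ ≤ ∑ y ∈ S, (δ x y : ℝ) :=
          sum_le_sum_of_subset_of_nonneg (erase_subset x S) fun _ _ _ => Nat.cast_nonneg _
  have hlow := sum_le_sum hrow
  rw [sum_const, nsmul_eq_mul] at hlow
  push_cast at hsum
  have hpos : (0 : ℝ) < #S := Nat.cast_pos.2 hS.card_pos
  nlinarith

theorem card_le_mul_card_pow_of_sum_sum_le {ι β : Type*} [Fintype ι] [Fintype β]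
    (v : α → ι → β) (D : β → β → ℕ) (hD : ∀ b, D b b = 0) {c d : ℝ} (hd : 0 ≤ d)
    (havg : ∀ (S : Finset α) (i : ι),
      (↑(∑ x ∈ S, ∑ y ∈ S, D (v x i) (v y i)) : ℝ) ≤ c * (↑(#S) : ℝ) ^ 2)
    (𝒞 : Finset α) (h𝒞 : ∀ x ∈ 𝒞, ∀ y ∈ 𝒞, x ≠ y → d ≤ (↑(∑ i, D (v x i) (v y i)) : ℝ))
    (K : Finset ι) (hK : c * #K ≤ d - 1) :
    (#𝒞 : ℝ) ≤ d * Fintype.card β ^ (Fintype.card ι - #K) := by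
  classical
  -- codewords agreeing off `K` are at distance `≥ d` on `K` alone, where the average is small
  let π : α → (↥Kᶜ → β) := fun x i => v x i
  have hfiber : ∀ w ∈ (univ : Finset (↥Kᶜ → β)), #{x ∈ 𝒞 | π x = w} ≤ ⌊d⌋₊ := by
    intro w _
    set S := {x ∈ 𝒞 | π x = w}
    refine Nat.le_floor (card_le_of_sum_sum_le S (fun x y => ∑ i ∈ K, D (v x i) (v y i)) hd ?_ ?_)
    · intro x hx y hy hne
      have hoff : ∀ i ∉ K, v x i = v y i := fun i hi =>
        congrFun ((mem_filter.1 hx).2.trans (mem_filter.1 hy).2.symm) ⟨i, mem_compl.2 hi⟩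
      rw [sum_subset (subset_univ K) fun i _ hi => by rw [hoff i hi, hD]]
      exact h𝒞 x (mem_filter.1 hx).1 y (mem_filter.1 hy).1 hne
    · have hswap : ∑ x ∈ S, ∑ y ∈ S, ∑ i ∈ K, D (v x i) (v y i)
          = ∑ i ∈ K, ∑ x ∈ S, ∑ y ∈ S, D (v x i) (v y i) :=
        (sum_congr rfl fun x _ => sum_comm).trans sum_comm
      calc (↑(∑ x ∈ S, ∑ y ∈ S, ∑ i ∈ K, D (v x i) (v y i)) : ℝ)
          = ∑ i ∈ K, (↑(∑ x ∈ S, ∑ y ∈ S, D (v x i) (v y i)) : ℝ) := by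
            rw [hswap, Nat.cast_sum]
        _ ≤ ∑ _i ∈ K, c * (↑(#S) : ℝ) ^ 2 := sum_le_sum fun i _ => havg S i
        _ = c * #K * (↑(#S) : ℝ) ^ 2 := by rw [sum_const, nsmul_eq_mul]; ring
        _ ≤ (d - 1) * (↑(#S) : ℝ) ^ 2 := by gcongr
  have hcard := card_le_mul_card_image_of_maps_to (fun x _ => mem_univ (π x)) ⌊d⌋₊ hfiber
  rw [card_univ, Fintype.card_fun, Fintype.card_coe, card_compl] at hcard
  calc (#𝒞 : ℝ) ≤ ⌊d⌋₊ * Fintype.card β ^ (Fintype.card ι - #K) := by exact_mod_cast hcard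
    _ ≤ d * Fintype.card β ^ (Fintype.card ι - #K) := by gcongr; exact Nat.floor_le hd

end Plotkin

section Rate

open Real Filter Topology

theorem one_sub_min_floor_div_le {n : ℕ} (hn : 0 < n) (x : ℝ) :
    1 - ((min n ⌊x⌋₊ : ℕ) : ℝ) / n ≤ max (1 - x / n) 0 + 1 / n := by
  have hn' : (0 : ℝ) < n := Nat.cast_pos.2 hn
  rcases min_cases n ⌊x⌋₊ with ⟨h, -⟩ | ⟨h, -⟩
  · rw [h, div_self hn'.ne', sub_self]
    positivity
  · have hfloor : x - 1 ≤ ⌊x⌋₊ := (Nat.sub_one_lt_floor x).le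
    calc 1 - ((min n ⌊x⌋₊ : ℕ) : ℝ) / n ≤ 1 - x / n + 1 / n := by
          rw [h, sub_add, sub_le_sub_iff_left, ← sub_div]
          gcongr
      _ ≤ max (1 - x / n) 0 + 1 / n := by gcongr; exact le_max_left _ _

theorem tendsto_logb_mul_add_one_div_atTop {A : ℝ} (hA : 0 ≤ A) :
    Tendsto (fun x : ℝ => logb 2 (A * x + 1) / x) atTop (𝓝 0) := by
  rcases hA.eq_or_lt with rfl | hA
  · simp
  have hlin : Tendsto (fun x : ℝ => A * x + 1) atTop atTop :=
    tendsto_atTop_add_const_right _ 1 (tendsto_id.const_mul_atTop hA)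
  refine ((tendsto_pow_logb_div_mul_add_atTop (b := 2) A⁻¹ (-A⁻¹) 1 (inv_ne_zero hA.ne')).comp
    hlin).congr fun x => ?_
  simp only [Function.comp_apply, pow_one]
  congr 1
  field_simp
  ring

theorem tendsto_one_div_add_logb_div_atTop {A : ℝ} (hA : 0 ≤ A) (C : ℝ) :
    Tendsto (fun n : ℕ => 1 / (n : ℝ) + logb 2 (A * n + 1) / (C * n)) atTop (𝓝 0) := by
  have hlog := ((tendsto_logb_mul_add_one_div_atTop hA).const_mul C⁻¹).comp
    tendsto_natCast_atTop_atTop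
  simpa using tendsto_one_div_atTop_nhds_zero_nat.add (hlog.congr fun n => by
    simp only [Function.comp_apply]
    ring)

variable {a b n : ℕ} (B : Matrix (Fin a) (Fin b) (ZMod 2)) (T : Matrix (Fin a) (Fin a) (ZMod 2))

theorem logb_card_le {c d : ℝ} (hd : 1 ≤ d)
    (havg : ∀ (S : Finset (Matrix (Fin a) (Fin n) (ZMod 2)))
      (f : Matrix (Fin a) (Fin n) (ZMod 2) → Fin a → ZMod 2),
      (↑(∑ X ∈ S, ∑ Y ∈ S, colDelta B (f X) (f Y)) : ℝ) ≤ c * (↑(#S) : ℝ) ^ 2)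
    (𝒞 : Finset (Matrix (Fin a) (Fin n) (ZMod 2)))
    (hdist : ∀ X ∈ 𝒞, ∀ Y ∈ 𝒞, X ≠ Y → d ≤ (transDist B (T * X) (T * Y) : ℝ))
    {k : ℕ} (hk : k ≤ n) (hck : c * k ≤ d - 1) :
    logb 2 #𝒞 ≤ logb 2 d + a * (n - k : ℕ) := by
  obtain ⟨K, -, hK⟩ := exists_subset_card_eq (s := (univ : Finset (Fin n))) (by simpa using hk)
  have hcard := card_le_mul_card_pow_of_sum_sum_le (fun X i r => (T * X) r i) (colDelta B)
    (colDelta_self B) (c := c) (d := d) (by linarith) (fun S i => havg S _) 𝒞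
    (by simpa only [transDist] using hdist) K (hK ▸ hck)
  rw [Fintype.card_fun, ZMod.card, Fintype.card_fin, Fintype.card_fin, hK] at hcard
  rcases (#𝒞).eq_zero_or_pos with h0 | hpos
  · rw [h0, Nat.cast_zero, logb_zero]
    have := logb_nonneg one_lt_two hd
    positivity
  · calc logb 2 #𝒞 ≤ logb 2 (d * ((2 : ℕ) ^ a : ℕ) ^ (n - k)) :=
          logb_le_logb_of_le one_lt_two (Nat.cast_pos.2 hpos) hcard
      _ = logb 2 d + a * (n - k : ℕ) := by
          rw [logb_mul (by positivity) (by positivity), logb_pow, Nat.cast_pow, logb_pow,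
            Nat.cast_ofNat, logb_self_eq_one one_lt_two]
          ring

theorem logb_card_div_le (ha : 0 < a) (hn : 0 < n) {c d : ℝ} (hc : 0 < c) (hd : 1 ≤ d)
    (havg : ∀ (S : Finset (Matrix (Fin a) (Fin n) (ZMod 2)))
      (f : Matrix (Fin a) (Fin n) (ZMod 2) → Fin a → ZMod 2),
      (↑(∑ X ∈ S, ∑ Y ∈ S, colDelta B (f X) (f Y)) : ℝ) ≤ c * (↑(#S) : ℝ) ^ 2)
    (𝒞 : Finset (Matrix (Fin a) (Fin n) (ZMod 2)))
    (hdist : ∀ X ∈ 𝒞, ∀ Y ∈ 𝒞, X ≠ Y → d ≤ (transDist B (T * X) (T * Y) : ℝ)) :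
    logb 2 #𝒞 / (a * n) ≤ max (1 - (d - 1) / (c * n)) 0 + 1 / n + logb 2 d / (a * n) := by
  set k := min n ⌊(d - 1) / c⌋₊
  have hkn : k ≤ n := min_le_left _ _
  have hck : c * k ≤ d - 1 := by
    have : (k : ℝ) ≤ (d - 1) / c :=
      (Nat.cast_le.2 (min_le_right _ _)).trans (Nat.floor_le (div_nonneg (by linarith) hc.le))
    rwa [le_div_iff₀' hc] at this
  have hlog := logb_card_le B T hd havg 𝒞 hdist hkn hck
  have hrest : 1 - (k : ℝ) / n ≤ max (1 - (d - 1) / (c * n)) 0 + 1 / n := by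
    simpa only [div_div] using one_sub_min_floor_div_le hn ((d - 1) / c)
  have hn' : (0 : ℝ) < n := Nat.cast_pos.2 hn
  have ha' : (0 : ℝ) < a := Nat.cast_pos.2 ha
  calc logb 2 #𝒞 / (a * n) ≤ (logb 2 d + a * (n - k : ℕ)) / (a * n) := by gcongr
    _ = 1 - (k : ℝ) / n + logb 2 d / (a * n) := by
        rw [Nat.cast_sub hkn]
        field_simp
        ring
    _ ≤ _ := by linarith

end Rate

section Network

open Real

theorem sq_mul_div_mul_sub_sq_eq {C E : ℝ} (hE : E ≠ 0) (p : ℝ) :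
    E ^ 2 * p / (C * E - C ^ 2) = p / ((1 - C / E) * (C / E)) := by
  rw [one_sub_div hE, div_mul_div_comm, div_div_eq_mul_div]
  ring

variable {C E m n : ℕ} (hC : 0 < C) (hm : 0 < m) (hn : 0 < n) {p : ℝ} (hp : 0 ≤ p)
  (That : Matrix (Fin (C * m)) (Fin (E * m)) (ZMod 2))
  (T : Matrix (Fin (C * m)) (Fin (C * m)) (ZMod 2))
  (hcov : ∀ v, ∃ z, That *ᵥ z = v ∧ hammingNorm z ≤ C * m)
  (𝒞 : Finset (Matrix (Fin (C * m)) (Fin n) (ZMod 2)))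
  (hdist : ∀ X ∈ 𝒞, ∀ Y ∈ 𝒞, X ≠ Y →
    2 * p * E * m * n + 1 ≤ (transDist That (T * X) (T * Y) : ℝ))
include hC hm hn hp hcov hdist

theorem logb_card_div_le_of_two_mul_le (hCE : 2 * C ≤ E) :
    logb 2 #𝒞 / (C * m * n) ≤ max (1 - E ^ 2 * p / (C * E - C ^ 2)) 0 + 1 / n
      + logb 2 (2 * p * E * m * n + 1) / (C * m * n) := by
  have hCm : 0 < C * m := Nat.mul_pos hC hm
  have hC' : (C : ℝ) < E := Nat.cast_lt.2 (by omega)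
  have hCE' : (↑(C * m) : ℝ) / ↑(E * m) < 1 :=
    (div_lt_one (Nat.cast_pos.2 (by nlinarith))).2 (Nat.cast_lt.2 (by nlinarith))
  have h := logb_card_div_le That T hCm hn (mul_pos (by positivity) (sub_pos.2 hCE'))
    (le_add_of_nonneg_left (by positivity))
    (sum_sum_colDelta_le_of_covering That (by nlinarith) (by nlinarith) hcov) 𝒞 hdist
  have hq : (2 * p * E * m * n + 1 - 1) / (2 * ↑(C * m) * (1 - (↑(C * m) : ℝ) / ↑(E * m)) * n)
      = E ^ 2 * p / (C * E - C ^ 2) := by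
    have : (E : ℝ) - C ≠ 0 := by linarith
    have : (E : ℝ) ≠ 0 := by linarith
    have : (m : ℝ) ≠ 0 := Nat.cast_ne_zero.2 hm.ne'
    have : (n : ℝ) ≠ 0 := Nat.cast_ne_zero.2 hn.ne'
    push_cast
    field_simp
    ring
  rwa [hq, Nat.cast_mul] at h

theorem logb_card_div_le_max_one_sub_four_mul (hE : 0 < E) :
    logb 2 #𝒞 / (C * m * n) ≤ max (1 - 4 * p) 0 + 1 / n
      + logb 2 (2 * p * E * m * n + 1) / (C * m * n) := by
  have h := logb_card_div_le That T (Nat.mul_pos hC hm) hn (by positivity)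
    (le_add_of_nonneg_left (by positivity))
    (sum_sum_colDelta_le_half That fun v => (hcov v).imp fun _ => And.left) 𝒞 hdist
  have hq : (2 * p * E * m * n + 1 - 1) / ((↑(E * m) : ℝ) / 2 * n) = 4 * p := by
    have : (E : ℝ) ≠ 0 := Nat.cast_ne_zero.2 hE.ne'
    have : (m : ℝ) ≠ 0 := Nat.cast_ne_zero.2 hm.ne'
    have : (n : ℝ) ≠ 0 := Nat.cast_ne_zero.2 hn.ne'
    push_cast
    field_simp
    ring
  rwa [hq, Nat.cast_mul] at h

end Network

open Real Filter

/-- Asymptotic Plotkin-type rate bound.  Any good code for the worst-case binary-error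
network channel must have transformed minimum transform distance at least `2pEmn + 1`;
for any `ε > 0` and all large enough block lengths `n`, every such code satisfies:
if `E ≥ 2C` and `p ≤ (1 - C/E)(C/E)` then its rate is at most `1 - E²p/(CE - C²) + ε`;
if `E ≥ 2C` and `p > (1 - C/E)(C/E)` then its rate is at most `ε` (rate `0` asymptotically);
if `E < 2C` and `p ≤ 1/4` then its rate is at most `1 - 4p + ε`;
if `E < 2C` and `p > 1/4` then its rate is at most `ε`. -/
theorem plotkin_type_rate_bound {C E m : ℕ} (hC : 0 < C) (hm : 0 < m) (hCE : C ≤ E)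
    (p : ℝ) (hp0 : 0 ≤ p) :
    ∀ ε > (0 : ℝ), ∃ n₀ : ℕ, ∀ n ≥ n₀,
      ∀ (That : Matrix (Fin (C * m)) (Fin (E * m)) (ZMod 2))
        (T : Matrix (Fin (C * m)) (Fin (C * m)) (ZMod 2)),
        (∀ v : Fin (C * m) → ZMod 2, ∃ z : Fin (E * m) → ZMod 2,
          That.mulVec z = v ∧ hammingNorm z ≤ C * m) →
      ∀ 𝒞 : Finset (Matrix (Fin (C * m)) (Fin n) (ZMod 2)),
        (∀ X1 ∈ 𝒞, ∀ X2 ∈ 𝒞, X1 ≠ X2 →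
          2 * p * E * m * n + 1 ≤ (transDist That (T * X1) (T * X2) : ℝ)) →
        ((2 * C ≤ E → p ≤ (1 - (C : ℝ) / E) * ((C : ℝ) / E) →
            Real.logb 2 𝒞.card / (C * m * n) ≤
              1 - (E : ℝ) ^ 2 * p / ((C : ℝ) * E - (C : ℝ) ^ 2) + ε) ∧
         (2 * C ≤ E → (1 - (C : ℝ) / E) * ((C : ℝ) / E) < p →
            Real.logb 2 𝒞.card / (C * m * n) ≤ ε) ∧
         (E < 2 * C → p ≤ 1 / 4 →
            Real.logb 2 𝒞.card / (C * m * n) ≤ 1 - 4 * p + ε) ∧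
         (E < 2 * C → 1 / 4 < p →
            Real.logb 2 𝒞.card / (C * m * n) ≤ ε)) := by
  intro ε hε
  obtain ⟨n₀, hn₀⟩ := eventually_atTop.1 ((tendsto_one_div_add_logb_div_atTop
    (A := 2 * p * E * m) (by positivity) (C * m)).eventually (gt_mem_nhds hε))
  refine ⟨n₀ + 1, fun n hn That T hcov 𝒞 hdist => ?_⟩
  have hn₀ := hn₀ n (by omega)
  have hn : 0 < n := by omega
  have hE : 0 < E := hC.trans_le hCE
  have hge (h : 2 * C ≤ E) : logb 2 #𝒞 / (C * m * n)
      ≤ max (1 - p / ((1 - (C : ℝ) / E) * ((C : ℝ) / E))) 0 + ε := by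
    have := logb_card_div_le_of_two_mul_le hC hm hn hp0 That T hcov 𝒞 hdist h
    rw [sq_mul_div_mul_sub_sq_eq (Nat.cast_ne_zero.2 hE.ne')] at this
    linarith
  have hlt : logb 2 #𝒞 / (C * m * n) ≤ max (1 - 4 * p) 0 + ε := by
    linarith [logb_card_div_le_max_one_sub_four_mul hC hm hn hp0 That T hcov 𝒞 hdist hE]
  have hθ (h : 2 * C ≤ E) : 0 < (1 - (C : ℝ) / E) * ((C : ℝ) / E) := by
    have hCE' : (C : ℝ) / E < 1 := (div_lt_one (Nat.cast_pos.2 hE)).2 (Nat.cast_lt.2 (by omega))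
    exact mul_pos (sub_pos.2 hCE') (by positivity)
  rw [sq_mul_div_mul_sub_sq_eq (Nat.cast_ne_zero.2 hE.ne')]
  refine ⟨fun h hp => ?_, fun h hp => ?_, fun h hp => ?_, fun h hp => ?_⟩
  · exact (hge h).trans_eq (by rw [max_eq_left (sub_nonneg.2 ((div_le_one (hθ h)).2 hp))])
  · exact (hge h).trans_eq
      (by rw [max_eq_right (sub_nonpos.2 ((one_lt_div (hθ h)).2 hp).le), zero_add])
  · exact hlt.trans_eq (by rw [max_eq_left (by linarith)])
  · exact hlt.trans_eq (by rw [max_eq_right (by linarith), zero_add])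
end

section
/- GMD decoding expectation lemma: let W = (W_1,…,W_N) be the transmitted concatenated codeword and Y = (Y_1,…,Y_N) the received word with total transform distance d_{T̂}(W,Y) < (d_out·d_in)/2. For each i, decode Y_i to V_i minimizing d_{T̂}(C_in(V_i), Y_i), set ω_i = min(d_{T̂}(C_in(V_i), Y_i), d_in/2), and independently erase position i with probability 2ω_i/d_in. If e is the number of non-erased wrong positions (C_in(V_i) ≠ W_i) and s the number of erasures, then E[2e + s] < d_out. -/
/-!
Write `δ_i` for the distance of `Y_i` to the transmitted `W_i` and `D_i ≤ δ_i` for its distance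
to the decoded `C_in(V_i)`, so `ω_i = min D_i (d_in/2)`. Each position costs
`2ω_i/d_in ≤ 2δ_i/d_in` in expectation when decoded correctly, and `2 - 2ω_i/d_in` when
decoded wrongly; in the latter case `ω_i + δ_i ≥ d_in`, by the triangle inequality through
`Y_i` if `ω_i = D_i`, and because `δ_i ≥ D_i ≥ d_in/2` otherwise. So the
expectation is at most `2 Σ δ_i / d_in < d_out`.

The transform distance is a sum of coset distances `colDelta`: the least number of columns of
`T̂` adding up to `v - u`. Surjectivity of `T̂` makes this infimum attained, and the triangle
inequality comes from `Σ_s + Σ_t = Σ_{s ∆ t}` in characteristic two.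
-/

open Matrix Finset

open scoped symmDiff

lemma Finset.sum_symmDiff_of_add_self {ι M : Type*} [AddCommMonoid M] [DecidableEq ι]
    (h2 : ∀ x : M, x + x = 0) (s t : Finset ι) (f : ι → M) :
    ∑ i ∈ s ∆ t, f i = ∑ i ∈ s, f i + ∑ i ∈ t, f i := by
  rw [symmDiff_def, sup_eq_union, sum_union disjoint_sdiff_sdiff,
    ← sum_inter_add_sum_sdiff s t, ← sum_inter_add_sum_sdiff t s, inter_comm t s]
  have hcancel := h2 (∑ i ∈ s ∩ t, f i)
  calc _ = (∑ i ∈ s ∩ t, f i + ∑ i ∈ s ∩ t, f i)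
        + (∑ i ∈ s \ t, f i + ∑ i ∈ t \ s, f i) := by rw [hcancel, zero_add]
    _ = _ := by abel

lemma Finset.card_symmDiff_le {ι : Type*} [DecidableEq ι] (s t : Finset ι) :
    (s ∆ t).card ≤ s.card + t.card :=
  (card_le_card symmDiff_le_sup).trans (card_union_le s t)

lemma add_self_eq_zero_of_zmod_two {a : ℕ} (x : Fin a → ZMod 2) : x + x = 0 :=
  funext fun r => CharTwo.add_self_eq_zero (x r)

section colDelta

variable {a c : ℕ} {B : Matrix (Fin a) (Fin c) (ZMod 2)}

lemma colDelta_le_card {u v : Fin a → ZMod 2} {s : Finset (Fin c)}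
    (h : u + ∑ j ∈ s, Bᵀ j = v) : colDelta B u v ≤ s.card :=
  Nat.sInf_le ⟨s, rfl, h⟩

lemma exists_card_eq_colDelta (hB : Function.Surjective B.mulVec) (u v : Fin a → ZMod 2) :
    ∃ s : Finset (Fin c), s.card = colDelta B u v ∧ u + ∑ j ∈ s, Bᵀ j = v := by
  classical
  obtain ⟨w, hw⟩ := hB (v - u)
  have hsum : ∑ j ∈ univ.filter (w · = 1), Bᵀ j = B *ᵥ w := by
    ext r
    rw [Finset.sum_apply (g := fun j => Bᵀ j)]
    simp only [transpose_apply, mulVec, dotProduct, sum_filter]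
    refine sum_congr rfl fun j _ => ?_
    rcases (show ∀ x : ZMod 2, x = 0 ∨ x = 1 by decide) (w j) with h | h <;> simp [h]
  have hne : {k | ∃ s : Finset (Fin c), s.card = k ∧ u + ∑ j ∈ s, Bᵀ j = v}.Nonempty :=
    ⟨_, _, rfl, by rw [hsum, hw, add_sub_cancel]⟩
  exact Nat.sInf_mem hne

lemma colDelta_comm (u v : Fin a → ZMod 2) : colDelta B u v = colDelta B v u := by
  have hshift (s : Finset (Fin c)) :
      u + ∑ j ∈ s, Bᵀ j = v ↔ v + ∑ j ∈ s, Bᵀ j = u := by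
    constructor <;> rintro rfl <;> rw [add_assoc, add_self_eq_zero_of_zmod_two, add_zero]
  simp only [colDelta, hshift]

lemma colDelta_triangle (hB : Function.Surjective B.mulVec) (u v w : Fin a → ZMod 2) :
    colDelta B u w ≤ colDelta B u v + colDelta B v w := by
  classical
  obtain ⟨s, hs, huv⟩ := exists_card_eq_colDelta hB u v
  obtain ⟨t, ht, hvw⟩ := exists_card_eq_colDelta hB v w
  have hsum := sum_symmDiff_of_add_self add_self_eq_zero_of_zmod_two s t (fun j => Bᵀ j)
  calc colDelta B u w ≤ (s ∆ t).card := colDelta_le_card (by rw [hsum, ← add_assoc, huv, hvw])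
    _ ≤ colDelta B u v + colDelta B v w := hs ▸ ht ▸ card_symmDiff_le s t

end colDelta

section transDist

variable {a b c : ℕ} {B : Matrix (Fin a) (Fin c) (ZMod 2)}

lemma transDist_comm (M₁ M₂ : Matrix (Fin a) (Fin b) (ZMod 2)) :
    transDist B M₁ M₂ = transDist B M₂ M₁ :=
  sum_congr rfl fun _ _ => colDelta_comm _ _

lemma transDist_triangle (hB : Function.Surjective B.mulVec)
    (M₁ M₂ M₃ : Matrix (Fin a) (Fin b) (ZMod 2)) :
    transDist B M₁ M₃ ≤ transDist B M₁ M₂ + transDist B M₂ M₃ := by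
  rw [transDist, transDist, transDist, ← sum_add_distrib]
  exact sum_le_sum fun _ _ => colDelta_triangle hB _ _ _

end transDist

lemma gmd_expected_cost_le {p : Prop} [Decidable p] {D δ d : ℝ} (hd : 0 < d) (hDδ : D ≤ δ)
    (hp : p → d ≤ D + δ) :
    (if p then 2 * (1 - 2 * min D (d / 2) / d) else 0) + 2 * min D (d / 2) / d ≤ 2 * δ / d := by
  have hωδ : min D (d / 2) ≤ δ := (min_le_left _ _).trans hDδ
  split_ifs with h
  · have hdω : d ≤ min D (d / 2) + δ := by
      rcases min_cases D (d / 2) with ⟨hω, -⟩ | ⟨hω, hlt⟩ <;> rw [hω]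
      · exact hp h
      · linarith
    rw [le_div_iff₀ hd]
    field_simp
    linarith
  · rw [zero_add]
    gcongr

open scoped Classical in
/-- GMD decoding expectation lemma: if the transmitted concatenated codeword
`W = (W_1,…,W_N)` and the received word `Y` satisfy `d_{T̂}(W,Y) < d_out·d_in/2`,
`V_i` is a minimum-transform-distance inner decoding of `Y_i`, `ω_i = min(d_{T̂}(C_in(V_i),
Y_i), d_in/2)`, and position `i` is independently erased with probability `2ω_i/d_in`,
then the expected value of (2 × number of non-erased wrong positions + number of
erasures), namely `Σ_i (1[C_in(V_i) ≠ W_i]·2(1 - 2ω_i/d_in) + 2ω_i/d_in)`,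
is less than `d_out`. -/
theorem gmd_expectation {a c L N dIn dOut : ℕ} {ι : Type*}
    (hdIn : 0 < dIn)
    (That : Matrix (Fin a) (Fin c) (ZMod 2))
    (hsurj : Function.Surjective That.mulVec)
    (Cin : ι → Matrix (Fin a) (Fin L) (ZMod 2))
    (hmin : ∀ x y : ι, Cin x ≠ Cin y → dIn ≤ transDist That (Cin x) (Cin y))
    (W Y : Fin N → Matrix (Fin a) (Fin L) (ZMod 2))
    (hW : ∀ i, ∃ x, W i = Cin x)
    (V : Fin N → ι)
    (hV : ∀ i, ∀ x, transDist That (Cin (V i)) (Y i) ≤ transDist That (Cin x) (Y i))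
    (htot : (∑ i, (transDist That (W i) (Y i) : ℝ)) < (dOut : ℝ) * dIn / 2) :
    (∑ i, ((if Cin (V i) ≠ W i then
        2 * (1 - 2 * (min ((transDist That (Cin (V i)) (Y i) : ℝ)) ((dIn : ℝ) / 2)) / dIn)
      else 0)
      + 2 * (min ((transDist That (Cin (V i)) (Y i) : ℝ)) ((dIn : ℝ) / 2)) / dIn)) <
      (dOut : ℝ) := by
  have hdIn' : (0 : ℝ) < dIn := Nat.cast_pos.mpr hdIn
  have hdecoded (i : Fin N) : transDist That (Cin (V i)) (Y i) ≤ transDist That (W i) (Y i) := by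
    obtain ⟨x, hx⟩ := hW i
    exact hx ▸ hV i x
  have hwrong (i : Fin N) (hne : Cin (V i) ≠ W i) :
      dIn ≤ transDist That (Cin (V i)) (Y i) + transDist That (W i) (Y i) := by
    obtain ⟨x, hx⟩ := hW i
    calc dIn ≤ transDist That (Cin (V i)) (W i) := hx ▸ hmin _ _ (hx ▸ hne)
      _ ≤ _ := transDist_comm (W i) (Y i) ▸ transDist_triangle hsurj _ (Y i) _
  calc _ ≤ ∑ i, 2 * (transDist That (W i) (Y i) : ℝ) / dIn :=
        sum_le_sum fun i _ => gmd_expected_cost_le hdIn' (by exact_mod_cast hdecoded i)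
          fun hne => by exact_mod_cast hwrong i hne
    _ = 2 * (∑ i, (transDist That (W i) (Y i) : ℝ)) / dIn := by rw [← sum_div, ← mul_sum]
    _ < dOut := by
        rw [div_lt_iff₀ hdIn']
        linarith
end
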